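/- There is no binary self-orthogonal [118,7,58] code; that is, no 7-dimensional self-orthogonal subspace of F_2^118 has minimum distance 58. -/

import Mathlib

open Finset

/-- Hamming weight of a binary vector. -/
def wt {ι : Type*} [Fintype ι] (x : ι → ZMod 2) : ℕ :=
  (Finset.univ.filter fun i => x i ≠ 0).card

/-- A binary linear code is self-orthogonal if any two codewords are orthogonal. -/
def SelfOrthogonal {ι : Type*} [Fintype ι] (C : Submodule (ZMod 2) (ι → ZMod 2)) : Prop :=
  ∀ x ∈ C, ∀ y ∈ C, ∑ i, x i * y i = 0

/-- `C` has minimum distance exactly `d`: some nonzero codeword has weight `d`,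
and every nonzero codeword has weight at least `d`. -/
def HasMinDist {ι : Type*} [Fintype ι] (C : Submodule (ZMod 2) (ι → ZMod 2)) (d : ℕ) : Prop :=
  (∃ x ∈ C, x ≠ 0 ∧ wt x = d) ∧ ∀ x ∈ C, x ≠ 0 → d ≤ wt x

/-- The Griesmer function `g(k,d) = ∑_{i=0}^{k-1} ⌈d/2^i⌉` (ceiling division). -/
def griesmerBound (k d : ℕ) : ℕ :=
  ∑ i ∈ Finset.range k, (d + 2 ^ i - 1) / 2 ^ i

/-! In a self-orthogonal binary code all weights are even and `wt (x + y) ≡ wt x + wt y (mod 4)`,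
so the codewords of weight divisible by `4` form a subcode `D`. A codeword of weight
`58 ≡ 2 (mod 4)` gives `D` index `2`, so `|D| = 64`, and the nonzero words of `D` have weight at
least `60`. Double counting the total weight of `D` coordinatewise (the Plotkin bound) then
requires `2 · 63 · 60 ≤ 118 · 64`, which is false. -/

section Weight

variable {ι : Type*} [Fintype ι]

lemma wt_eq_sum_ite (x : ι → ZMod 2) : wt x = ∑ i, if x i ≠ 0 then 1 else 0 :=
  Finset.card_filter _ _

lemma wt_zero : wt (0 : ι → ZMod 2) = 0 := by
  simp [wt]

lemma natCast_wt (x : ι → ZMod 2) : (wt x : ZMod 2) = ∑ i, x i := by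
  have h : ∀ a : ZMod 2, ((if a ≠ 0 then 1 else 0 : ℕ) : ZMod 2) = a := by decide
  rw [wt_eq_sum_ite, Nat.cast_sum]
  exact Finset.sum_congr rfl fun i _ => h (x i)

lemma two_dvd_wt_of_sum_eq_zero {x : ι → ZMod 2} (hx : ∑ i, x i = 0) : 2 ∣ wt x := by
  rw [← ZMod.natCast_eq_zero_iff, natCast_wt, hx]

/-- `x * y` is the intersection of the supports of `x` and `y`. -/
lemma wt_add_add_two_mul_wt_mul (x y : ι → ZMod 2) :
    wt (x + y) + 2 * wt (x * y) = wt x + wt y := by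
  have h : ∀ a b : ZMod 2, ((if a + b ≠ 0 then 1 else 0) + 2 * if a * b ≠ 0 then 1 else 0 : ℕ) =
      (if a ≠ 0 then 1 else 0) + if b ≠ 0 then 1 else 0 := by decide
  simp only [wt_eq_sum_ite, Finset.mul_sum, ← Finset.sum_add_distrib, Pi.add_apply, Pi.mul_apply]
  exact Finset.sum_congr rfl fun i _ => h (x i) (y i)

end Weight

section SelfOrthogonal

variable {ι : Type*} [Fintype ι] {C : Submodule (ZMod 2) (ι → ZMod 2)}

lemma SelfOrthogonal.wt_add_mod_four (hC : SelfOrthogonal C) {x y : ι → ZMod 2}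
    (hx : x ∈ C) (hy : y ∈ C) : wt (x + y) % 4 = (wt x + wt y) % 4 := by
  have hxy : 2 ∣ wt (x * y) := two_dvd_wt_of_sum_eq_zero (hC x hx y hy)
  have := wt_add_add_two_mul_wt_mul x y
  omega

lemma SelfOrthogonal.two_dvd_wt (hC : SelfOrthogonal C) {x : ι → ZMod 2} (hx : x ∈ C) :
    2 ∣ wt x := by
  have hxx : x * x = x := funext fun i => (by decide : ∀ a : ZMod 2, a * a = a) (x i)
  have := two_dvd_wt_of_sum_eq_zero (x := x * x) (hC x hx x hx)
  rwa [hxx] at this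

def SelfOrthogonal.doublyEven (hC : SelfOrthogonal C) : Submodule (ZMod 2) (ι → ZMod 2) where
  carrier := {x | x ∈ C ∧ 4 ∣ wt x}
  add_mem' := by
    rintro x y ⟨hx, hx4⟩ ⟨hy, hy4⟩
    have := hC.wt_add_mod_four hx hy
    exact ⟨C.add_mem hx hy, by omega⟩
  zero_mem' := ⟨C.zero_mem, by simp [wt_zero]⟩
  smul_mem' := by
    intro c x hx
    rcases (by decide : ∀ c : ZMod 2, c = 0 ∨ c = 1) c with rfl | rfl
    · rw [zero_smul]
      exact ⟨C.zero_mem, by simp [wt_zero]⟩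
    · rwa [one_smul]

lemma SelfOrthogonal.mem_doublyEven (hC : SelfOrthogonal C) {x : ι → ZMod 2} :
    x ∈ hC.doublyEven ↔ x ∈ C ∧ 4 ∣ wt x :=
  Iff.rfl

/-- Adding a codeword of weight `≡ 2 (mod 4)` swaps the doubly-even subcode with its
complement in `C`. -/
lemma SelfOrthogonal.card_eq_two_mul_card_doublyEven (hC : SelfOrthogonal C)
    {x₀ : ι → ZMod 2} (hx₀ : x₀ ∈ C) (hwt : wt x₀ % 4 = 2) :
    Nat.card C = 2 * Nat.card hC.doublyEven := by
  have hle : hC.doublyEven.toAddSubgroup ≤ C.toAddSubgroup := fun x hx => hx.1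
  have hindex : hC.doublyEven.toAddSubgroup.relIndex C.toAddSubgroup = 2 := by
    refine AddSubgroup.relIndex_eq_two_iff.mpr ⟨x₀, hx₀, fun b (hb : b ∈ C) => ?_⟩
    have hadd := hC.wt_add_mod_four hb hx₀
    have heven := hC.two_dvd_wt hb
    simp only [Submodule.mem_toAddSubgroup, hC.mem_doublyEven, C.add_mem hb hx₀, hb, true_and]
    by_cases h : 4 ∣ wt b
    · exact Or.inr ⟨h, by omega⟩
    · exact Or.inl ⟨by omega, h⟩
  have := AddSubgroup.relIndex_mul_relIndex ⊥ _ _ bot_le hle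
  rw [AddSubgroup.relIndex_bot_left, AddSubgroup.relIndex_bot_left, hindex] at this
  exact this.symm.trans (mul_comm _ _)

end SelfOrthogonal

section Plotkin

variable {ι : Type*} (D : Submodule (ZMod 2) (ι → ZMod 2)) [Fintype D]

/-- Translation by a codeword that is nonzero at `j` maps the codewords nonzero at `j` to
codewords vanishing at `j`. -/
lemma two_mul_card_coord_ne_zero_le (j : ι) :
    2 * #{x : D | (x : ι → ZMod 2) j ≠ 0} ≤ Fintype.card D := by
  rcases Finset.eq_empty_or_nonempty {x : D | (x : ι → ZMod 2) j ≠ 0} with h | ⟨u, hu⟩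
  · simp [h]
  have huj : (u : ι → ZMod 2) j = 1 := by
    have h : ∀ a : ZMod 2, a ≠ 0 → a = 1 := by decide
    exact h _ (Finset.mem_filter.mp hu).2
  have htranslate : #{x : D | (x : ι → ZMod 2) j ≠ 0} ≤ #{x : D | ¬ (x : ι → ZMod 2) j ≠ 0} := by
    refine Finset.card_le_card_of_injOn (· + u) (fun x hx => ?_) (add_left_injective u).injOn
    have h : ∀ a : ZMod 2, a ≠ 0 → ¬ a + 1 ≠ 0 := by decide
    simpa [huj] using h _ (Finset.mem_filter.mp hx).2
  have hsplit := Finset.card_filter_add_card_filter_not (s := Finset.univ)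
    (fun x : D => (x : ι → ZMod 2) j ≠ 0)
  rw [Finset.card_univ] at hsplit
  omega

lemma sum_wt_eq_sum_card_coord_ne_zero [Fintype ι] :
    ∑ x : D, wt (x : ι → ZMod 2) = ∑ j, #{x : D | (x : ι → ZMod 2) j ≠ 0} := by
  simp only [wt_eq_sum_ite, Finset.card_filter]
  exact Finset.sum_comm

variable {D}

/-- The Plotkin bound for binary linear codes, obtained by double counting the total weight. -/
theorem plotkin_bound [Fintype ι] {d : ℕ} (hd : ∀ x ∈ D, x ≠ 0 → d ≤ wt x) :
    2 * ((Fintype.card D - 1) * d) ≤ Fintype.card ι * Fintype.card D := by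
  have hlower : (Fintype.card D - 1) * d ≤ ∑ x : D, wt (x : ι → ZMod 2) := by
    rw [← Finset.add_sum_erase _ _ (Finset.mem_univ 0), ZeroMemClass.coe_zero, wt_zero,
      zero_add, ← Finset.card_univ, ← Finset.card_erase_of_mem (Finset.mem_univ 0), ← smul_eq_mul]
    refine Finset.card_nsmul_le_sum _ _ _ fun x hx => hd x x.2 ?_
    exact fun h => Finset.ne_of_mem_erase hx (Subtype.ext h)
  have hupper : 2 * ∑ x : D, wt (x : ι → ZMod 2) ≤ Fintype.card ι * Fintype.card D := by
    rw [sum_wt_eq_sum_card_coord_ne_zero, Finset.mul_sum, ← smul_eq_mul, ← Finset.card_univ,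
      ← Finset.sum_const]
    exact Finset.sum_le_sum fun j _ => two_mul_card_coord_ne_zero_le D j
  omega

end Plotkin

theorem stmt14 :
    ¬ ∃ C : Submodule (ZMod 2) (Fin 118 → ZMod 2),
      Module.finrank (ZMod 2) C = 7 ∧ SelfOrthogonal C ∧ HasMinDist C 58 := by
  classical
  rintro ⟨C, hrank, hSO, ⟨x₀, hx₀, -, hwt⟩, hmin⟩
  have hcardC : Nat.card C = 2 ^ 7 := by
    rw [Module.natCard_eq_pow_finrank (K := ZMod 2), hrank, Nat.card_zmod]
  have hcardD : Fintype.card hSO.doublyEven = 64 := by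
    have := hSO.card_eq_two_mul_card_doublyEven hx₀ (by rw [hwt])
    rw [Nat.card_eq_fintype_card (α := hSO.doublyEven)] at this
    omega
  have hminD : ∀ x ∈ hSO.doublyEven, x ≠ 0 → 60 ≤ wt x := fun x hx hne => by
    have := hmin x hx.1 hne
    have := hx.2
    omega
  have := plotkin_bound hminD
  rw [hcardD, Fintype.card_fin] at this
  omega
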